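/- arXiv:1406.0444 — 2 statements merged into one kernel-verified Lean document; each statement's English description precedes it below -/
import Mathlib

section
/- Let n ≥ 1 and let λ be a partition such that the bipartition (λ, λ*) has defect n relative to δ = 0 (the condition that the mixed tensor R(λ) of Gl(n|n) is projective). Then l(λ) ≥ n and λ_1 ≥ n. -/
/-- A partition, encoded 0-indexed: `f i` is the part `λ_{i+1}`.  It is weakly
decreasing and eventually zero. -/
structure PartitionFn where
  f : ℕ → ℕ
  antitone' : ∀ i j : ℕ, i ≤ j → f j ≤ f i
  ev_zero : ∃ N : ℕ, ∀ i : ℕ, N ≤ i → f i = 0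

/-- The conjugate partition (0-indexed): `conjFn f j = λ*_{j+1} = #{i ≥ 1 : λ_i ≥ j+1}`. -/
noncomputable def conjFn (f : ℕ → ℕ) (j : ℕ) : ℕ := Set.ncard {i : ℕ | j + 1 ≤ f i}

/-- The length `l(λ) = #{i : λ_i > 0}` of a partition. -/
noncomputable def plen (f : ℕ → ℕ) : ℕ := Set.ncard {i : ℕ | 0 < f i}

/-- `I_∧(λ) = {λ^L_i − i + 1 : i ≥ 1}` (0-indexed: `{λ^L_{i+1} − i : i ≥ 0}`). -/
def Iwedge (fL : ℕ → ℕ) : Set ℤ := {x : ℤ | ∃ i : ℕ, x = (fL i : ℤ) - (i : ℤ)}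

/-- `I_∨(λ) = {i − δ − λ^R_i : i ≥ 1}` (0-indexed: `{(i+1) − δ − λ^R_{i+1} : i ≥ 0}`). -/
def Ivee (δ : ℤ) (fR : ℕ → ℕ) : Set ℤ :=
  {x : ℤ | ∃ i : ℕ, x = (i : ℤ) + 1 - δ - (fR i : ℤ)}

/-- Vertex `x` is labelled `∨` in the weight diagram of the bipartition `(fL, fR)`. -/
def VeeLabel (δ : ℤ) (fL fR : ℕ → ℕ) (x : ℤ) : Prop :=
  x ∈ Ivee δ fR ∧ x ∉ Iwedge fL

/-- Vertex `x` is labelled `∧` in the weight diagram of the bipartition `(fL, fR)`. -/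
def WedgeLabel (δ : ℤ) (fL fR : ℕ → ℕ) (x : ℤ) : Prop :=
  x ∈ Iwedge fL ∧ x ∉ Ivee δ fR

/-- A finite family of pairwise disjoint pairs `(v, w)` with `v < w`, `v` labelled `∨`
and `w` labelled `∧` in the weight diagram of the bipartition `(fL, fR)` relative to `δ`. -/
def CapFamily (δ : ℤ) (fL fR : ℕ → ℕ) (S : Finset (ℤ × ℤ)) : Prop :=
  (∀ p ∈ S, p.1 < p.2 ∧ VeeLabel δ fL fR p.1 ∧ WedgeLabel δ fL fR p.2) ∧
  ∀ p ∈ S, ∀ q ∈ S, p ≠ q →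
    p.1 ≠ q.1 ∧ p.1 ≠ q.2 ∧ p.2 ≠ q.1 ∧ p.2 ≠ q.2

/-- The defect of the bipartition `(fL, fR)` relative to `δ` equals `n`:
`n` is the maximal cardinality of a `CapFamily`. -/
def DefectEq (δ : ℤ) (fL fR : ℕ → ℕ) (n : ℕ) : Prop :=
  (∃ S : Finset (ℤ × ℤ), CapFamily δ fL fR S ∧ S.card = n) ∧
  ∀ S : Finset (ℤ × ℤ), CapFamily δ fL fR S → S.card ≤ n

/-- The bipartition `(fL, fR)` is `(m|n)`-cross:
`∃ 1 ≤ i ≤ m+1` with `λ^L_i + λ^R_{m+2−i} ≤ n` (0-indexed below). -/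
def IsCross (m n : ℕ) (fL fR : ℕ → ℕ) : Prop :=
  ∃ i : ℕ, i ≤ m ∧ fL i + fR (m - i) ≤ n

/-!
Distinct caps have distinct `∨`-ends and distinct `∧`-ends, so if every `∨`-end (or every
`∧`-end) of a cap comes from an index `< k`, there are at most `k` caps. With `δ = 0` and right
partition `λ*`, an index `j ≥ λ_1` gives the vertex `j + 1 > λ_1`, which lies to the right of every
vertex of `I_∧ ⊆ (-∞, λ_1]`, so it cannot be the left end of a cap: hence `n ≤ λ_1`. Dually, an
index `i ≥ l(λ)` gives the vertex `-i ≤ -l(λ)`, to the left of every vertex of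
`I_∨ ⊆ [1 - l(λ), ∞)`, so it cannot be the right end of a cap: hence `n ≤ l(λ)`.
-/

theorem Finset.card_le_of_injOn_of_forall_exists_lt {α β : Type*} {S : Finset α} {F : α → β}
    {k : ℕ} (φ : ℕ → β) (hF : Set.InjOn F S) (h : ∀ p ∈ S, ∃ j < k, φ j = F p) :
    S.card ≤ k := by
  classical
  calc S.card = (S.image F).card := (Finset.card_image_of_injOn hF).symm
    _ ≤ ((Finset.range k).image φ).card := by
        refine Finset.card_le_card fun b hb => ?_
        obtain ⟨p, hp, rfl⟩ := Finset.mem_image.mp hb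
        obtain ⟨j, hjk, hj⟩ := h p hp
        exact Finset.mem_image.mpr ⟨j, Finset.mem_range.mpr hjk, hj⟩
    _ ≤ k := Finset.card_image_le.trans (Finset.card_range k).le

namespace CapFamily

variable {δ : ℤ} {fL fR : ℕ → ℕ} {S : Finset (ℤ × ℤ)} {k : ℕ}

theorem card_le_of_vee_index_lt (hS : CapFamily δ fL fR S)
    (hk : ∀ p ∈ S, ∀ j : ℕ, p.1 = (j : ℤ) + 1 - δ - fR j → j < k) : S.card ≤ k :=
  Finset.card_le_of_injOn_of_forall_exists_lt (fun j : ℕ => (j : ℤ) + 1 - δ - fR j)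
    (fun p hp q hq hpq => by_contra fun hne => (hS.2 p hp q hq hne).1 hpq)
    fun p hp =>
      let ⟨j, hj⟩ := (hS.1 p hp).2.1.1
      ⟨j, hk p hp j hj, hj.symm⟩

theorem card_le_of_wedge_index_lt (hS : CapFamily δ fL fR S)
    (hk : ∀ p ∈ S, ∀ i : ℕ, p.2 = (fL i : ℤ) - i → i < k) : S.card ≤ k :=
  Finset.card_le_of_injOn_of_forall_exists_lt (fun i : ℕ => (fL i : ℤ) - i)
    (fun p hp q hq hpq => by_contra fun hne => (hS.2 p hp q hq hne).2.2.2 hpq)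
    fun p hp =>
      let ⟨i, hi⟩ := (hS.1 p hp).2.2.1
      ⟨i, hk p hp i hi, hi.symm⟩

end CapFamily

namespace PartitionFn

variable (lam : PartitionFn)

theorem finite_setOf_pos : {i | 0 < lam.f i}.Finite := by
  obtain ⟨N, hN⟩ := lam.ev_zero
  refine (Set.finite_Iio N).subset fun i (hi : 0 < lam.f i) => ?_
  by_contra hiN
  exact hi.ne' (hN i (not_lt.mp hiN))

theorem eq_zero_of_plen_le {i : ℕ} (hi : plen lam.f ≤ i) : lam.f i = 0 := by
  by_contra hne
  have hsub : (Finset.range (i + 1) : Set ℕ) ⊆ {k | 0 < lam.f k} := fun k hk =>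
    lt_of_lt_of_le (Nat.pos_of_ne_zero hne)
      (lam.antitone' k i (Nat.lt_succ_iff.mp (Finset.mem_range.mp hk)))
  have := Set.ncard_le_ncard hsub lam.finite_setOf_pos
  rw [Set.ncard_coe_finset, Finset.card_range] at this
  exact absurd hi (by unfold plen; omega)

theorem conjFn_le_plen (j : ℕ) : conjFn lam.f j ≤ plen lam.f :=
  Set.ncard_le_ncard (fun i (hi : j + 1 ≤ lam.f i) => show 0 < lam.f i by omega)
    lam.finite_setOf_pos

theorem conjFn_eq_zero_of_le {j : ℕ} (hj : lam.f 0 ≤ j) : conjFn lam.f j = 0 := by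
  have hempty : {i | j + 1 ≤ lam.f i} = ∅ :=
    Set.eq_empty_of_forall_notMem fun i (hi : j + 1 ≤ lam.f i) => by
      have := lam.antitone' 0 i i.zero_le
      omega
  rw [conjFn, hempty, Set.ncard_empty]

theorem wedge_le_head {w : ℤ} (hw : w ∈ Iwedge lam.f) : w ≤ lam.f 0 := by
  obtain ⟨i, rfl⟩ := hw
  have := lam.antitone' 0 i i.zero_le
  omega

theorem vee_ge_one_sub_plen {v : ℤ} (hv : v ∈ Ivee 0 (conjFn lam.f)) :
    1 - (plen lam.f : ℤ) ≤ v := by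
  obtain ⟨j, rfl⟩ := hv
  have := lam.conjFn_le_plen j
  omega

theorem vee_index_lt_head {v w : ℤ} {j : ℕ} (hv : v = (j : ℤ) + 1 - 0 - conjFn lam.f j)
    (hw : w ∈ Iwedge lam.f) (hvw : v < w) : j < lam.f 0 := by
  by_contra! hj
  have := lam.conjFn_eq_zero_of_le hj
  have := lam.wedge_le_head hw
  omega

theorem wedge_index_lt_plen {v w : ℤ} {i : ℕ} (hv : v ∈ Ivee 0 (conjFn lam.f))
    (hw : w = (lam.f i : ℤ) - i) (hvw : v < w) : i < plen lam.f := by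
  by_contra! hi
  have := lam.eq_zero_of_plen_le hi
  have := lam.vee_ge_one_sub_plen hv
  omega

end PartitionFn

theorem stmt6_general (n : ℕ) (lam : PartitionFn)
    (h : DefectEq 0 lam.f (conjFn lam.f) n) :
    n ≤ plen lam.f ∧ n ≤ lam.f 0 := by
  obtain ⟨⟨S, hS, rfl⟩, -⟩ := h
  constructor
  · refine hS.card_le_of_wedge_index_lt fun p hp i hi => ?_
    obtain ⟨hlt, ⟨hv, -⟩, -⟩ := hS.1 p hp
    exact lam.wedge_index_lt_plen hv hi hlt
  · refine hS.card_le_of_vee_index_lt fun p hp j hj => ?_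
    obtain ⟨hlt, -, hw, -⟩ := hS.1 p hp
    exact lam.vee_index_lt_head hj hw hlt

/-- if `d((λ, λ*)) = n` relative to `δ = 0` (i.e. `R(λ)` is projective),
then `l(λ) ≥ n` and `λ_1 ≥ n`. -/
theorem stmt6 (n : ℕ) (hn : 1 ≤ n) (lam : PartitionFn)
    (h : DefectEq 0 lam.f (conjFn lam.f) n) :
    n ≤ plen lam.f ∧ n ≤ lam.f 0 :=
  stmt6_general n lam h
end

section
/- Let n ≥ 1. The staircase partition (n, n−1, …, 2, 1) satisfies d(((n,…,1), (n,…,1)*)) = n relative to δ = 0, and it is the unique partition of minimal size with this defect: every partition λ with d((λ, λ*)) = n (relative to δ = 0) satisfies |λ| ≥ n(n+1)/2, with equality if and only if λ = (n, n−1, …, 2, 1). (Equivalently, there is a unique projective mixed tensor R(λ) of Gl(n|n) with λ of smallest degree, given by the staircase.) -/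
/-!
Read off the weight diagram of `(λ, λ*)` with `δ = 0`: row `i` of `λ` puts a `∧`-candidate at
`λ_i − i + 1` and column `j` a `∨`-candidate at `j − λ*_j`. If such a `∨` lies strictly left of
such a `∧`, then the box `(i, j)` belongs to `λ`. Disjoint caps therefore give boxes of `λ` in
pairwise distinct rows and pairwise distinct columns, i.e. non-attacking rooks on the Young
diagram. At most `m` rooks sit in the first `m` rows, and the others sit in distinct columns
`< λ_{m+1}`, so `n` rooks force `λ_{m+1} ≥ n − m`: `λ` contains the staircase, whence the bound
and the equality case. Conversely the staircase has caps `(n − 2k − 1, n − 2k)`, and it has only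
`n` nonzero rows.
-/

open Finset

theorem finsum_eq_finsum_iff_of_le {α M : Type*} [AddCommMonoid M] [PartialOrder M]
    [IsOrderedCancelAddMonoid M] {f g : α → M} (hf : Function.HasFiniteSupport f)
    (hg : Function.HasFiniteSupport g) (h : f ≤ g) :
    ∑ᶠ a, f a = ∑ᶠ a, g a ↔ f = g := by
  classical
  set s := (hf.union hg).toFinset
  rw [finsum_eq_sum_of_support_subset f (s := s) (by simp [s]),
    finsum_eq_sum_of_support_subset g (s := s) (by simp [s]),
    sum_eq_sum_iff_of_le fun a _ => h a]
  refine ⟨fun hs => funext fun a => ?_, fun hfg a _ => congrFun hfg a⟩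
  by_cases ha : a ∈ s
  · exact hs a ha
  · simp only [s, Set.Finite.mem_toFinset, Set.mem_union, Function.mem_support, not_or,
      not_not] at ha
    rw [ha.1, ha.2]

theorem Antitone.card_le_add_of_nonattacking {α : Type*} {f : ℕ → ℕ} (hf : Antitone f)
    {S : Finset α} {row col : α → ℕ} (hrow : Set.InjOn row S) (hcol : Set.InjOn col S)
    (hcell : ∀ p ∈ S, col p < f (row p)) (m : ℕ) : S.card ≤ m + f m := by
  have hupper : (S.filter fun p => row p < m).card ≤ m := by
    simpa using card_le_card_of_injOn row (t := range m) (fun p hp => by simp_all)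
      (hrow.mono (coe_subset.2 (filter_subset _ _)))
  have hlower : (S.filter fun p => ¬ row p < m).card ≤ f m := by
    refine (card_le_card_of_injOn col (t := range (f m)) (fun p hp => ?_)
      (hcol.mono (coe_subset.2 (filter_subset _ _)))).trans_eq (card_range _)
    simp only [coe_filter, Set.mem_ofPred_eq, not_lt, mem_coe, mem_range] at hp ⊢
    exact (hcell p hp.1).trans_le (hf hp.2)
  rw [← card_filter_add_card_filter_not (fun p => row p < m)]
  omega

namespace PartitionFn

variable (lam : PartitionFn)

theorem hasFiniteSupport : Function.HasFiniteSupport lam.f := by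
  obtain ⟨N, hN⟩ := lam.ev_zero
  exact (Set.finite_Iio N).subset fun i hi => lt_of_not_ge fun h => hi (hN i h)

theorem antitone : Antitone lam.f := fun i j h => lam.antitone' i j h

theorem lt_conjFn_iff {i j : ℕ} : i < conjFn lam.f j ↔ j < lam.f i := by
  obtain ⟨N, hN⟩ := lam.ev_zero
  have hex : ∃ k, lam.f k ≤ j := ⟨N, by simp [hN N le_rfl]⟩
  have hrows : {i | j + 1 ≤ lam.f i} = Set.Iio (Nat.find hex) := by
    ext i
    simp only [Set.mem_ofPred_eq, Set.mem_Iio, Nat.lt_find_iff, not_le]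
    exact ⟨fun h k hk => Nat.lt_of_lt_of_le h (lam.antitone hk), fun h => h i le_rfl⟩
  rw [conjFn, hrows, Set.ncard_Iio_nat, ← Set.mem_Iio, ← hrows]
  rfl

theorem lt_of_vee_lt_wedge {i j : ℕ}
    (h : (j : ℤ) + 1 - conjFn lam.f j < (lam.f i : ℤ) - i) : j < lam.f i := by
  by_contra hji
  have : conjFn lam.f j ≤ i := not_lt.1 fun hi => hji (lam.lt_conjFn_iff.1 hi)
  omega

def staircase (n : ℕ) : PartitionFn :=
  ⟨fun i => n - i, fun _ _ _ => by omega, ⟨n, fun _ _ => by omega⟩⟩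

theorem conjFn_staircase (n : ℕ) : conjFn (staircase n).f = (staircase n).f :=
  funext fun _ => eq_of_forall_lt_iff fun _ => by
    rw [lt_conjFn_iff]
    simp only [staircase]
    omega

theorem finsum_staircase (n : ℕ) : ∑ᶠ i, (staircase n).f i = n * (n + 1) / 2 := by
  rw [finsum_eq_sum_of_support_subset _ (s := range (n + 1)) fun i hi => by
    simp only [staircase, Function.mem_support, coe_range, Set.mem_Iio] at hi ⊢
    omega]
  have hreflect := sum_range_reflect (fun i => i) (n + 1)
  simp only [add_tsub_cancel_right] at hreflect
  simp only [staircase, hreflect, sum_range_id, add_tsub_cancel_right, mul_comm]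

end PartitionFn

open PartitionFn

theorem CapFamily.card_le_add {lam : PartitionFn} {S : Finset (ℤ × ℤ)}
    (hS : CapFamily 0 lam.f (conjFn lam.f) S) (m : ℕ) : S.card ≤ m + lam.f m := by
  have hwedge (p : ℤ × ℤ) : ∃ i : ℕ, p ∈ S → p.2 = lam.f i - i := by
    by_cases hp : p ∈ S
    · exact (hS.1 p hp).2.2.1.imp fun _ hi _ => hi
    · exact ⟨0, fun h => (hp h).elim⟩
  have hvee (p : ℤ × ℤ) : ∃ j : ℕ, p ∈ S → p.1 = j + 1 - 0 - conjFn lam.f j := by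
    by_cases hp : p ∈ S
    · exact (hS.1 p hp).2.1.1.imp fun _ hj _ => hj
    · exact ⟨0, fun h => (hp h).elim⟩
  choose row hrow using hwedge
  choose col hcol using hvee
  refine lam.antitone.card_le_add_of_nonattacking (row := row) (col := col) ?_ ?_ ?_ m
  · intro p hp q hq h
    by_contra hpq
    exact (hS.2 p hp q hq hpq).2.2.2 (by rw [hrow p hp, hrow q hq, h])
  · intro p hp q hq h
    by_contra hpq
    exact (hS.2 p hp q hq hpq).1 (by rw [hcol p hp, hcol q hq, h])
  · intro p hp
    apply lam.lt_of_vee_lt_wedge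
    have hlt := (hS.1 p hp).1
    rw [hcol p hp, hrow p hp] at hlt
    omega

theorem CapFamily.staircase_le {lam : PartitionFn} {S : Finset (ℤ × ℤ)}
    (hS : CapFamily 0 lam.f (conjFn lam.f) S) : (staircase S.card).f ≤ lam.f := fun m => by
  have := hS.card_le_add m
  simp only [staircase]
  omega

def staircaseCaps (n : ℕ) : Finset (ℤ × ℤ) :=
  (range n).image fun k : ℕ => ((n : ℤ) - 2 * k - 1, (n : ℤ) - 2 * k)

theorem card_staircaseCaps (n : ℕ) : (staircaseCaps n).card = n := by
  rw [staircaseCaps, card_image_of_injective _ fun a b h => by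
    simp only [Prod.mk.injEq] at h; omega, card_range]

theorem capFamily_staircaseCaps (n : ℕ) :
    CapFamily 0 (staircase n).f (staircase n).f (staircaseCaps n) := by
  simp only [CapFamily, VeeLabel, WedgeLabel, Ivee, Iwedge, staircase, staircaseCaps, mem_image,
    mem_range]
  refine ⟨?_, ?_⟩
  · rintro _ ⟨k, hk, rfl⟩
    simp only [Set.mem_ofPred_eq, not_exists]
    exact ⟨by omega, ⟨⟨n - 1 - k, by omega⟩, fun i => by omega⟩, ⟨k, by omega⟩, fun i => by omega⟩
  · rintro _ ⟨k, hk, rfl⟩ _ ⟨l, hl, rfl⟩ hkl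
    have : k ≠ l := by rintro rfl; exact hkl rfl
    simp only [ne_eq]
    omega

theorem defectEq_staircase (n : ℕ) :
    DefectEq 0 (staircase n).f (conjFn (staircase n).f) n := by
  refine ⟨⟨staircaseCaps n, ?_, card_staircaseCaps n⟩,
    fun S hS => by simpa [staircase] using hS.card_le_add n⟩
  rw [conjFn_staircase]
  exact capFamily_staircaseCaps n

theorem stmt7_general (n : ℕ) :
    DefectEq 0 (fun i => n - i) (conjFn (fun i => n - i)) n ∧
    ∀ lam : PartitionFn, DefectEq 0 lam.f (conjFn lam.f) n →
      n * (n + 1) / 2 ≤ ∑ᶠ i : ℕ, lam.f i ∧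
      ((∑ᶠ i : ℕ, lam.f i) = n * (n + 1) / 2 ↔ lam.f = fun i => n - i) := by
  refine ⟨defectEq_staircase n, fun lam hlam => ?_⟩
  obtain ⟨S, hS, hcard⟩ := hlam.1
  have hle : (staircase n).f ≤ lam.f := hcard ▸ hS.staircase_le
  have hfin := (staircase n).hasFiniteSupport
  rw [← finsum_staircase n]
  exact ⟨finsum_le_finsum' hfin lam.hasFiniteSupport hle,
    eq_comm.trans ((finsum_eq_finsum_iff_of_le hfin lam.hasFiniteSupport hle).trans eq_comm)⟩

/-- the staircase `(n, n−1, …, 1)` (0-indexed `i ↦ n − i`) has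
`d((λ, λ*)) = n` relative to `δ = 0`, and it is the unique partition of minimal size
`n(n+1)/2` with this defect. -/
theorem stmt7 (n : ℕ) (hn : 1 ≤ n) :
    DefectEq 0 (fun i => n - i) (conjFn (fun i => n - i)) n ∧
    ∀ lam : PartitionFn, DefectEq 0 lam.f (conjFn lam.f) n →
      n * (n + 1) / 2 ≤ ∑ᶠ i : ℕ, lam.f i ∧
      ((∑ᶠ i : ℕ, lam.f i) = n * (n + 1) / 2 ↔ lam.f = fun i => n - i) :=
  stmt7_general n
end
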